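/- For every $r$ with $0 < r \leq \operatorname{arcsinh}(1)$, one has $e^{\pi - \pi/\sinh(r)} \leq \sinh^2(r)$, with equality at $r = \operatorname{arcsinh}(1)$. Equivalently, the function $K(r) = \frac{C(\operatorname{arcsinh}(1))\, e^{\pi}\, e^{-\pi/\sinh(r)}}{\sinh^2(r)}$ satisfies $K(r) \leq C(\operatorname{arcsinh}(1))$ for all $0 < r \leq \operatorname{arcsinh}(1)$. -/
import Mathlib


open Real

/-- Teo's function `C(r) = ((4π/3)(1 - sech⁶(r/2)))^{-1/2}`. -/
noncomputable def TeoC (r : ℝ) : ℝ :=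
  (Real.sqrt (4 * π / 3 * (1 - (1 / Real.cosh (r / 2)) ^ 6)))⁻¹

/-- The cusp bound of Lemma 3.4. -/
noncomputable def K (r : ℝ) : ℝ :=
  TeoC (Real.arsinh 1) * Real.exp π * Real.exp (-π / Real.sinh r) / Real.sinh r ^ 2

lemma key (s : ℝ) (hs : 0 < s) (hs1 : s ≤ 1) :
    Real.exp (π - π / s) ≤ s ^ 2 := by
  have hlog : 1 - 1/s ≤ Real.log s := by
    have h := Real.log_le_sub_one_of_pos (x := 1/s) (by positivity)
    rw [Real.log_div one_ne_zero hs.ne', Real.log_one] at h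
    linarith
  have hneg : 1 - 1/s ≤ 0 := by
    have : 1 ≤ 1/s := one_le_one_div hs hs1
    linarith
  have hpi : π - π / s ≤ 2 * Real.log s := by
    have h2 : π * (1 - 1/s) ≤ 2 * (1 - 1/s) := by
      nlinarith [Real.pi_gt_three]
    calc π - π / s = π * (1 - 1/s) := by ring
      _ ≤ 2 * (1 - 1/s) := h2
      _ ≤ 2 * Real.log s := by linarith
  calc Real.exp (π - π / s) ≤ Real.exp (2 * Real.log s) := Real.exp_le_exp.mpr hpi
    _ = s ^ 2 := by
        rw [two_mul, Real.exp_add, Real.exp_log hs]; ring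

/-- For `0 < r ≤ arcsinh 1` one has `e^{π - π/sinh r} ≤ sinh² r`, with equality at
`r = arcsinh 1`; equivalently `K(r) ≤ C(arcsinh 1)` on this interval. -/
theorem K_le_TeoC :
    (∀ r : ℝ, 0 < r → r ≤ Real.arsinh 1 →
      Real.exp (π - π / Real.sinh r) ≤ Real.sinh r ^ 2) ∧
    Real.exp (π - π / Real.sinh (Real.arsinh 1)) = Real.sinh (Real.arsinh 1) ^ 2 ∧
    ∀ r : ℝ, 0 < r → r ≤ Real.arsinh 1 → K r ≤ TeoC (Real.arsinh 1) := by
  have hmain : ∀ r : ℝ, 0 < r → r ≤ Real.arsinh 1 →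
      Real.exp (π - π / Real.sinh r) ≤ Real.sinh r ^ 2 := by
    intro r hr hr1
    have hs : 0 < Real.sinh r := Real.sinh_pos_iff.mpr hr
    have hs1 : Real.sinh r ≤ 1 := by
      have := Real.sinh_le_sinh.mpr hr1
      rwa [Real.sinh_arsinh] at this
    exact key _ hs hs1
  refine ⟨hmain, ?_, ?_⟩
  · rw [Real.sinh_arsinh]
    norm_num
  · intro r hr hr1
    have hs : 0 < Real.sinh r := Real.sinh_pos_iff.mpr hr
    have hC : 0 ≤ TeoC (Real.arsinh 1) := by
      unfold TeoC; positivity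
    have h := hmain r hr hr1
    rw [Real.exp_sub] at h
    have hfrac : Real.exp π * Real.exp (-π / Real.sinh r) / Real.sinh r ^ 2 ≤ 1 := by
      rw [div_le_one (by positivity), ← Real.exp_add]
      calc Real.exp (π + -π / Real.sinh r)
          = Real.exp (π - π / Real.sinh r) := by ring_nf
        _ ≤ Real.sinh r ^ 2 := hmain r hr hr1
    calc K r = TeoC (Real.arsinh 1) *
        (Real.exp π * Real.exp (-π / Real.sinh r) / Real.sinh r ^ 2) := by
          unfold K; ring
      _ ≤ TeoC (Real.arsinh 1) * 1 := by
          exact mul_le_mul_of_nonneg_left hfrac hC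
      _ = TeoC (Real.arsinh 1) := mul_one _
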